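/- Let g be a Lie bialgebra with cobracket δ, and let k be a Lie coideal of g (i.e. δ(k) ⊆ k ∧ g, viewing values in g ∧ g ⊆ g ⊗ g). Then the Lie subalgebra of g generated by k is again a Lie coideal of g. -/
import Mathlib


/- STATEMENT 4: in a Lie bialgebra `g` with cobracket `δ`, the Lie subalgebra generated by a
   Lie coideal `k` (i.e. `δ(k) ⊆ k ∧ g`, read inside `g ⊗ g` as `k ⊗ g + g ⊗ k`) is again a
   Lie coideal of `g`. -/

open scoped TensorProduct

namespace GQDP

variable (K : Type*) [Field K] (g : Type*) [LieRing g] [LieAlgebra K g]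

/-- The "tensor product" of two subspaces of `g`, as a subspace of `g ⊗ g`. -/
def tsub (A B : Submodule K g) : Submodule K (g ⊗[K] g) :=
  Submodule.span K {z | ∃ a ∈ A, ∃ b ∈ B, z = a ⊗ₜ[K] b}

/-- The adjoint action of `x ∈ g` on `g ⊗ g` (acting diagonally). -/
noncomputable def adT (x : g) : g ⊗[K] g →ₗ[K] g ⊗[K] g :=
  LinearMap.rTensor g (LieAlgebra.ad K g x) + LinearMap.lTensor g (LieAlgebra.ad K g x)

lemma tsub_mono {A B A' B' : Submodule K g} (hA : A ≤ A') (hB : B ≤ B') :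
    tsub K g A B ≤ tsub K g A' B' := by
  apply Submodule.span_mono
  rintro z ⟨a, ha, b, hb, rfl⟩
  exact ⟨a, hA ha, b, hB hb, rfl⟩

lemma adT_apply (x a b : g) : adT K g x (a ⊗ₜ[K] b) = ⁅x, a⁆ ⊗ₜ[K] b + a ⊗ₜ[K] ⁅x, b⁆ := by
  simp [adT, LieAlgebra.ad_apply]

lemma adT_mem {S : LieSubalgebra K g} {x : g} (hx : x ∈ S) {z : g ⊗[K] g}
    (hz : z ∈ tsub K g S.toSubmodule ⊤ ⊔ tsub K g ⊤ S.toSubmodule) :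
    adT K g x z ∈ tsub K g S.toSubmodule ⊤ ⊔ tsub K g ⊤ S.toSubmodule := by
  have key : ∀ (A B : Submodule K g), (∀ a ∈ A, ⁅x, a⁆ ∈ A) → (∀ b ∈ B, ⁅x, b⁆ ∈ B) →
      Submodule.map (adT K g x) (tsub K g A B) ≤ tsub K g A B := by
    intro A B hA hB
    rw [tsub, Submodule.map_span, Submodule.span_le]
    rintro _ ⟨_, ⟨a, ha, b, hb, rfl⟩, rfl⟩
    rw [adT_apply]
    exact add_mem (Submodule.subset_span ⟨_, hA a ha, _, hb, rfl⟩)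
      (Submodule.subset_span ⟨_, ha, _, hB b hb, rfl⟩)
  rcases Submodule.mem_sup.mp hz with ⟨u, hu, v, hv, rfl⟩
  rw [map_add]
  refine add_mem (Submodule.mem_sup_left ?_) (Submodule.mem_sup_right ?_)
  · exact key S.toSubmodule ⊤ (fun a ha => S.lie_mem hx ha) (fun _ _ => trivial)
      (Submodule.mem_map_of_mem hu)
  · exact key ⊤ S.toSubmodule (fun _ _ => trivial) (fun b hb => S.lie_mem hx hb)
      (Submodule.mem_map_of_mem hv)

/-- If `δ` is a Lie-bialgebra cobracket on `g` (a skew-symmetric 1-cocycle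
    for the adjoint action) and `k` is a Lie coideal of `g`, then the Lie subalgebra of `g`
    generated by `k` is again a Lie coideal of `g`. -/
theorem lieSpan_of_coideal_is_coideal
    (δ : g →ₗ[K] g ⊗[K] g)
    (hskew : ∀ x : g, (TensorProduct.comm K g g) (δ x) = - δ x)
    (hcocycle : ∀ x y : g, δ ⁅x, y⁆ = adT K g x (δ y) - adT K g y (δ x))
    (k : Submodule K g)
    (hk : ∀ x ∈ k, δ x ∈ tsub K g k ⊤ ⊔ tsub K g ⊤ k) :
    ∀ x ∈ LieSubalgebra.lieSpan K g (k : Set g),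
      δ x ∈
        tsub K g (LieSubalgebra.lieSpan K g (k : Set g)).toSubmodule ⊤ ⊔
        tsub K g ⊤ (LieSubalgebra.lieSpan K g (k : Set g)).toSubmodule := by
  set S := LieSubalgebra.lieSpan K g (k : Set g) with hS
  set T := tsub K g S.toSubmodule ⊤ ⊔ tsub K g ⊤ S.toSubmodule with hT
  let L : LieSubalgebra K g :=
    { toSubmodule := S.toSubmodule ⊓ T.comap δ
      lie_mem' := by
        rintro x y ⟨hxS, hxT⟩ ⟨hyS, hyT⟩
        refine ⟨S.lie_mem hxS hyS, ?_⟩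
        show δ ⁅x, y⁆ ∈ T
        rw [hcocycle]
        exact sub_mem (adT_mem K g hxS hyT) (adT_mem K g hyS hxT) }
  have hkL : (k : Set g) ⊆ L := by
    intro x hx
    refine ⟨LieSubalgebra.subset_lieSpan hx, ?_⟩
    show δ x ∈ T
    refine sup_le_sup (tsub_mono K g ?_ le_rfl) (tsub_mono K g le_rfl ?_) (hk x hx) <;>
      exact fun y hy => LieSubalgebra.subset_lieSpan hy
  intro x hx
  exact ((LieSubalgebra.lieSpan_le.mpr hkL) hx).2

end GQDP
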